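/- Let 0<p<∞ and φ∈𝒢_p with φ(1)=1 and lim_{t→0+} φ(t)=0. If lim_{t→∞} t^{-n/p} φ(t) = c for some c>0, then 𝔈_G ℳ_{φ,p}(ℝ^n)(t) ∼ t^{-1/p} for t>0, i.e. there exist constants 0<c_1≤c_2 with c_1 t^{-1/p} ≤ 𝔈_G ℳ_{φ,p}(ℝ^n)(t) ≤ c_2 t^{-1/p} for all t>0. -/

import Mathlib

open MeasureTheory Filter Set ENNReal

noncomputable section

abbrev En (n : ℕ) := EuclideanSpace ℝ (Fin n)

/-- The class `𝒢_p`: nondecreasing positive functions on `(0,∞)` such that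
`t ↦ φ(t) t^{-n/p}` is nonincreasing. -/
def GClass (n : ℕ) (p : ℝ) (φ : ℝ → ℝ) : Prop :=
  (∀ t : ℝ, 0 < t → 0 < φ t) ∧
    ∀ t r : ℝ, 0 < t → t ≤ r → φ t ≤ φ r ∧ φ r ≤ φ t * (r / t) ^ ((n : ℝ) / p)

/-- The axis-parallel compact cube centred at `x` with side length `r`. -/
def cube (n : ℕ) (x : En n) (r : ℝ) : Set (En n) := {y | ∀ i, |y i - x i| ≤ r / 2}

/-- The generalised Morrey quasi-norm `‖f | ℳ_{φ,p}(ℝⁿ)‖`. -/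
def morreyNorm {F : Type*} [NormedAddCommGroup F] (n : ℕ) (p : ℝ) (φ : ℝ → ℝ)
    (f : En n → F) : ℝ≥0∞ :=
  ⨆ (x : En n) (r : ℝ) (_ : 0 < r),
    ENNReal.ofReal (φ r) *
      ((volume (cube n x r))⁻¹ *
        ∫⁻ y in cube n x r, ENNReal.ofReal (‖f y‖ ^ p)) ^ (1 / p)

/-- The decreasing rearrangement `f*(t) = inf{σ>0 : |{x : |f(x)|>σ}| ≤ t}`. -/
def rearr {F : Type*} [NormedAddCommGroup F] (n : ℕ) (f : En n → F) (t : ℝ) : ℝ≥0∞ :=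
  sInf {σ : ℝ≥0∞ | 0 < σ ∧ volume {x : En n | σ < ENNReal.ofReal ‖f x‖} ≤ ENNReal.ofReal t}

/-- The growth envelope function of the generalised Morrey space `ℳ_{φ,p}(ℝⁿ)`. -/
def morreyEnvelope (n : ℕ) (p : ℝ) (φ : ℝ → ℝ) (t : ℝ) : ℝ≥0∞ :=
  ⨆ (f : En n → ℝ) (_ : Measurable f) (_ : morreyNorm n p φ f ≤ 1), rearr n f t

end

/-!
Upper bound: as `t ↦ φ t / t ^ (n / p)` decreases to `c`, we have `c ^ p * r ^ n ≤ φ r ^ p` for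
every `r`, so each `f` in the unit ball of `ℳ_{φ,p}` satisfies `∫_Q |f| ^ p ≤ c ^ (-p)` on every
cube `Q`, and Chebyshev's inequality gives `f*(t) ≤ c⁻¹ * t ^ (-1 / p)`.

Lower bound: test the envelope with `A • 1_S` where `|S| > t`. For `t ≥ 1` a single cube of
volume `2 t` works, because `φ r ^ p ≤ r ^ n` for `r ≥ 1`. For `t ≤ 1` pick a dyadic `s ≤ 1` with
`t ≤ φ s ^ p ≤ 2 ^ n * t` (possible since `φ → 0` at `0`) and let `S` be a row of about `t / s ^ n`
cubes of side `s` at mutual distance `3`. A cube of side `r ≤ 1` meets at most one of them, which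
controls the Morrey quotient for `r ≤ 1`; for `r ≥ 1` only `|S| ≈ t` matters.
-/

open scoped Topology

section Cubes

variable {n : ℕ}

lemma cube_eq_preimage (x : En n) (r : ℝ) :
    cube n x r = (MeasurableEquiv.toLp 2 (Fin n → ℝ)).symm ⁻¹'
      Set.univ.pi fun i => Icc (x i - r / 2) (x i + r / 2) := by
  ext y
  simp only [cube, mem_preimage, mem_univ_pi, mem_Icc, abs_le,
    MeasurableEquiv.coe_toLp_symm]
  exact forall_congr' fun i => by constructor <;> rintro ⟨h₁, h₂⟩ <;> constructor <;> linarith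

lemma measurableSet_cube (x : En n) (r : ℝ) : MeasurableSet (cube n x r) := by
  rw [cube_eq_preimage]
  exact (MeasurableEquiv.toLp 2 (Fin n → ℝ)).symm.measurable
    (MeasurableSet.univ_pi fun _ => measurableSet_Icc)

lemma volume_cube (x : En n) {r : ℝ} (hr : 0 ≤ r) :
    volume (cube n x r) = ENNReal.ofReal (r ^ n) := by
  rw [cube_eq_preimage, (EuclideanSpace.volume_preserving_symm_measurableEquiv_toLp
    (Fin n)).measure_preimage (MeasurableSet.univ_pi fun _ => measurableSet_Icc).nullMeasurableSet,
    volume_pi_pi]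
  simp [Real.volume_Icc, ENNReal.ofReal_pow hr]

lemma volume_cube_ne_top (x : En n) {r : ℝ} (hr : 0 ≤ r) : volume (cube n x r) ≠ ∞ := by
  simp [volume_cube x hr]

lemma measureReal_cube (x : En n) {r : ℝ} (hr : 0 ≤ r) : volume.real (cube n x r) = r ^ n := by
  rw [measureReal_def, volume_cube x hr, ENNReal.toReal_ofReal (by positivity)]

lemma abs_sub_le_of_mem_cube {a b y : En n} {s r : ℝ} (hya : y ∈ cube n a s)
    (hyb : y ∈ cube n b r) (i : Fin n) : |a i - b i| ≤ (s + r) / 2 := by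
  have hay : |a i - y i| ≤ s / 2 := by rw [abs_sub_comm]; exact hya i
  linarith [abs_sub_le (a i) (y i) (b i), hyb i]

lemma iUnion_cube_natCast_add_one : ⋃ k : ℕ, cube n 0 (k + 1) = univ := by
  refine eq_univ_of_forall fun x => mem_iUnion.2 ⟨⌈2 * ‖x‖⌉₊, fun i => ?_⟩
  have := PiLp.norm_apply_le x i
  simp only [PiLp.zero_apply, sub_zero, Real.norm_eq_abs] at this ⊢
  linarith [Nat.le_ceil (2 * ‖x‖)]

lemma volume_le_of_forall_inter_cube_le {T : Set (En n)} {m : ℝ≥0∞}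
    (h : ∀ R, 0 < R → volume (T ∩ cube n 0 R) ≤ m) : volume T ≤ m := by
  have hmono : Monotone fun k : ℕ => T ∩ cube n 0 (k + 1) := fun k l hkl =>
    inter_subset_inter_right _ fun y hy i => (hy i).trans (by gcongr)
  rw [← inter_univ T, ← iUnion_cube_natCast_add_one, inter_iUnion, hmono.measure_iUnion]
  exact iSup_le fun k => h _ k.cast_add_one_pos

end Cubes

lemma rpow_natCast_div_rpow {x : ℝ} (hx : 0 ≤ x) (n : ℕ) {p : ℝ} (hp : p ≠ 0) :
    (x ^ ((n : ℝ) / p)) ^ p = x ^ n := by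
  rw [← Real.rpow_mul hx, div_mul_cancel₀ _ hp, Real.rpow_natCast]

namespace GClass

variable {n : ℕ} {p : ℝ} {φ : ℝ → ℝ}

lemma pos (hφ : GClass n p φ) {r : ℝ} (hr : 0 < r) : 0 < φ r := hφ.1 r hr

lemma rpow_le_rpow (hφ : GClass n p φ) (hp : 0 < p) {u v : ℝ} (hu : 0 < u) (huv : u ≤ v) :
    φ u ^ p ≤ φ v ^ p :=
  Real.rpow_le_rpow (hφ.pos hu).le (hφ.2 u v hu huv).1 hp.le

lemma rpow_mul_pow_le (hφ : GClass n p φ) (hp : 0 < p) {u v : ℝ} (hu : 0 < u) (huv : u ≤ v) :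
    φ v ^ p * u ^ n ≤ φ u ^ p * v ^ n := by
  have hv := hu.trans_le huv
  have hgrow : φ v ^ p ≤ (φ u * (v / u) ^ ((n : ℝ) / p)) ^ p :=
    Real.rpow_le_rpow (hφ.pos hv).le (hφ.2 u v hu huv).2 hp.le
  rw [Real.mul_rpow (hφ.pos hu).le (by positivity),
    rpow_natCast_div_rpow (by positivity) n hp.ne', div_pow] at hgrow
  calc φ v ^ p * u ^ n ≤ φ u ^ p * (v ^ n / u ^ n) * u ^ n := by gcongr
    _ = φ u ^ p * v ^ n := by field_simp

lemma rpow_le_pow_of_one_le (hφ : GClass n p φ) (hp : 0 < p) (hφ1 : φ 1 = 1) {r : ℝ}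
    (hr : 1 ≤ r) : φ r ^ p ≤ r ^ n := by
  simpa [hφ1] using hφ.rpow_mul_pow_le hp one_pos hr

lemma mul_rpow_le_of_tendsto (hφ : GClass n p φ) (hp : 0 < p) {c : ℝ} (hc : 0 < c)
    (hlim : Tendsto (fun t : ℝ => φ t / t ^ ((n : ℝ) / p)) atTop (𝓝 c)) {r : ℝ} (hr : 0 < r) :
    c ^ p * r ^ n ≤ φ r ^ p := by
  have hratio : c * r ^ ((n : ℝ) / p) ≤ φ r := by
    rw [← le_div_iff₀ (by positivity)]
    refine le_of_tendsto hlim (eventually_atTop.2 ⟨r, fun v hv => ?_⟩)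
    have hv0 := hr.trans_le hv
    have hgrow := (hφ.2 r v hr hv).2
    rw [Real.div_rpow hv0.le hr.le] at hgrow
    rw [div_le_div_iff₀ (by positivity) (by positivity)]
    calc φ v * r ^ ((n : ℝ) / p)
        ≤ φ r * (v ^ ((n : ℝ) / p) / r ^ ((n : ℝ) / p)) * r ^ ((n : ℝ) / p) := by gcongr
      _ = φ r * v ^ ((n : ℝ) / p) := by field_simp
  have := Real.rpow_le_rpow (by positivity) hratio hp.le
  rwa [Real.mul_rpow hc.le (by positivity), rpow_natCast_div_rpow hr.le n hp.ne'] at this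

lemma exists_rpow_mem_Icc (hφ : GClass n p φ) (hp : 0 < p) (hφ1 : φ 1 = 1)
    (hφ0 : Tendsto φ (𝓝[>] 0) (𝓝 0)) {t : ℝ} (ht : 0 < t) (ht1 : t ≤ 1) :
    ∃ s, 0 < s ∧ s ≤ 1 ∧ t ≤ φ s ^ p ∧ φ s ^ p ≤ 2 ^ n * t := by
  have hdyadic : Tendsto (fun k : ℕ => φ (2⁻¹ ^ (k + 1)) ^ p) atTop (𝓝 0) := by
    have hpow := (tendsto_pow_atTop_nhdsWithin_zero_of_lt_one (r := (2 : ℝ)⁻¹) (by norm_num)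
      (by norm_num)).comp (tendsto_add_atTop_nat 1)
    have h := (hφ0.comp hpow).rpow_const (Or.inr hp.le)
    rwa [Real.zero_rpow hp.ne'] at h
  classical
  have hex : ∃ k : ℕ, φ (2⁻¹ ^ (k + 1)) ^ p < t := (hdyadic.eventually (gt_mem_nhds ht)).exists
  obtain ⟨k, hk, hmin⟩ : ∃ k : ℕ, φ (2⁻¹ ^ (k + 1)) ^ p < t ∧
      ∀ m < k, ¬ φ (2⁻¹ ^ (m + 1)) ^ p < t :=
    ⟨Nat.find hex, Nat.find_spec hex, fun m => Nat.find_min hex⟩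
  refine ⟨2⁻¹ ^ k, by positivity, pow_le_one₀ (by norm_num) (by norm_num), ?_, ?_⟩
  · cases k with
    | zero => simpa [hφ1] using ht1
    | succ m => exact not_lt.1 (hmin m m.lt_succ_self)
  · have hdouble := hφ.rpow_mul_pow_le hp (u := 2⁻¹ ^ (k + 1)) (v := 2⁻¹ ^ k) (by positivity)
      (pow_le_pow_of_le_one (by norm_num) (by norm_num) k.le_succ)
    rw [show ((2 : ℝ)⁻¹ ^ (k + 1)) ^ n = (2⁻¹ ^ k) ^ n * 2⁻¹ ^ n by rw [pow_succ, mul_pow]]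
      at hdouble
    have hhalf : φ (2⁻¹ ^ k) ^ p * 2⁻¹ ^ n ≤ φ (2⁻¹ ^ (k + 1)) ^ p :=
      le_of_mul_le_mul_right (by linarith) (by positivity : (0 : ℝ) < (2⁻¹ ^ k) ^ n)
    calc φ (2⁻¹ ^ k) ^ p = φ (2⁻¹ ^ k) ^ p * 2⁻¹ ^ n * 2 ^ n := by
          rw [mul_assoc, ← mul_pow]; norm_num
      _ ≤ 2 ^ n * t := by nlinarith [pow_pos (two_pos : (0 : ℝ) < 2) n]

end GClass

section UpperBound

variable {n : ℕ} {p : ℝ} {φ : ℝ → ℝ}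

lemma rearr_le_of_volume_le {F : Type*} [NormedAddCommGroup F] {f : En n → F} {a t : ℝ}
    (ha : 0 < a) (h : volume {x | a < ‖f x‖} ≤ ENNReal.ofReal t) :
    rearr n f t ≤ ENNReal.ofReal a := by
  refine sInf_le ⟨ENNReal.ofReal_pos.2 ha, ?_⟩
  simpa only [ENNReal.ofReal_lt_ofReal_iff_of_nonneg ha.le] using h

lemma lintegral_cube_le_of_morreyNorm_le_one (hp : 0 < p) {f : En n → ℝ}
    (hf : morreyNorm n p φ f ≤ 1) (x : En n) {R : ℝ} (hR : 0 < R) (hφR : 0 < φ R) :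
    ∫⁻ y in cube n x R, ENNReal.ofReal (‖f y‖ ^ p) ≤ ENNReal.ofReal (R ^ n / φ R ^ p) := by
  set I := ∫⁻ y in cube n x R, ENNReal.ofReal (‖f y‖ ^ p)
  have hterm : ENNReal.ofReal (φ R) * ((ENNReal.ofReal (R ^ n))⁻¹ * I) ^ (1 / p) ≤ 1 := by
    rw [← volume_cube x hR.le]
    refine le_trans ?_ hf
    exact le_iSup_of_le x (le_iSup_of_le R (le_iSup_of_le hR le_rfl))
  have hpow : ENNReal.ofReal (φ R ^ p) * ((ENNReal.ofReal (R ^ n))⁻¹ * I) ≤ 1 := by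
    have := ENNReal.rpow_le_rpow hterm hp.le
    rwa [ENNReal.one_rpow, ENNReal.mul_rpow_of_nonneg _ _ hp.le, ← ENNReal.rpow_mul,
      one_div_mul_cancel hp.ne', ENNReal.rpow_one,
      ENNReal.ofReal_rpow_of_nonneg hφR.le hp.le] at this
  have hR0 : ENNReal.ofReal (R ^ n) ≠ 0 := (ENNReal.ofReal_pos.2 (by positivity)).ne'
  calc I = ENNReal.ofReal (R ^ n) * ((ENNReal.ofReal (R ^ n))⁻¹ * I) :=
        (ENNReal.mul_inv_cancel_left hR0 ENNReal.ofReal_ne_top).symm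
    _ ≤ ENNReal.ofReal (R ^ n) * (ENNReal.ofReal (φ R ^ p))⁻¹ := by
        gcongr
        rw [ENNReal.le_inv_iff_mul_le, mul_comm]
        exact hpow
    _ = ENNReal.ofReal (R ^ n / φ R ^ p) := by
        rw [ENNReal.ofReal_div_of_pos (by positivity), div_eq_mul_inv]

lemma volume_lt_norm_inter_le {α : Type*} [MeasurableSpace α] (μ : Measure α) {f : α → ℝ}
    (hf : Measurable f) {a p : ℝ} (ha : 0 < a) (hp : 0 < p) (s : Set α) :
    μ ({x | a < ‖f x‖} ∩ s) ≤
      (∫⁻ y in s, ENNReal.ofReal (‖f y‖ ^ p) ∂μ) / ENNReal.ofReal (a ^ p) := by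
  have hmeas : Measurable fun y => ENNReal.ofReal (‖f y‖ ^ p) :=
    (hf.norm.pow_const p).ennreal_ofReal
  calc μ ({x | a < ‖f x‖} ∩ s)
      ≤ μ.restrict s {x | ENNReal.ofReal (a ^ p) ≤ ENNReal.ofReal (‖f x‖ ^ p)} :=
        (measure_mono (inter_subset_inter_left _ fun x hx =>
          ENNReal.ofReal_le_ofReal (Real.rpow_le_rpow ha.le (le_of_lt hx) hp.le))).trans
          (Measure.le_restrict_apply _ _)
    _ ≤ _ := meas_ge_le_lintegral_div hmeas.aemeasurable
        (ENNReal.ofReal_pos.2 (by positivity)).ne' ENNReal.ofReal_ne_top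

theorem morreyEnvelope_le (hp : 0 < p) (hφ : GClass n p φ) {c : ℝ} (hc : 0 < c)
    (hlow : ∀ r, 0 < r → c ^ p * r ^ n ≤ φ r ^ p) {t : ℝ} (ht : 0 < t) :
    morreyEnvelope n p φ t ≤ ENNReal.ofReal (c⁻¹ * t ^ (-(1 / p))) := by
  set a := c⁻¹ * t ^ (-(1 / p))
  have ha : 0 < a := by positivity
  have hap : (c ^ p)⁻¹ / a ^ p = t := by
    rw [Real.mul_rpow (by positivity) (by positivity), Real.inv_rpow hc.le,
      ← Real.rpow_mul ht.le, neg_mul, one_div_mul_cancel hp.ne', Real.rpow_neg_one]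
    field_simp
  refine iSup_le fun f => iSup₂_le fun hf hnorm => rearr_le_of_volume_le ha ?_
  refine volume_le_of_forall_inter_cube_le fun R hR => ?_
  have hmass : R ^ n / φ R ^ p ≤ (c ^ p)⁻¹ := by
    rw [div_le_iff₀ (by have := hφ.pos hR; positivity), inv_mul_eq_div,
      le_div_iff₀ (by positivity), mul_comm]
    exact hlow R hR
  calc volume ({x | a < ‖f x‖} ∩ cube n 0 R)
      ≤ (∫⁻ y in cube n 0 R, ENNReal.ofReal (‖f y‖ ^ p)) / ENNReal.ofReal (a ^ p) :=
        volume_lt_norm_inter_le volume hf ha hp _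
    _ ≤ ENNReal.ofReal (R ^ n / φ R ^ p) / ENNReal.ofReal (a ^ p) := by
        gcongr
        exact lintegral_cube_le_of_morreyNorm_le_one hp hnorm 0 hR (hφ.pos hR)
    _ ≤ ENNReal.ofReal t := by
        rw [← ENNReal.ofReal_div_of_pos (by positivity), ← hap]
        gcongr

end UpperBound

section LowerBound

variable {n : ℕ} {p : ℝ} {φ : ℝ → ℝ}

/-- `‖1_S | ℳ_{φ,p}‖ ^ p ≤ M`, in real arithmetic. -/
def IndicatorMorreyLE (n : ℕ) (p : ℝ) (φ : ℝ → ℝ) (S : Set (En n)) (M : ℝ) : Prop :=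
  ∀ (x : En n) (r : ℝ), 0 < r → φ r ^ p * volume.real (S ∩ cube n x r) ≤ M * r ^ n

lemma IndicatorMorreyLE.mono {S : Set (En n)} {M M' : ℝ} (h : IndicatorMorreyLE n p φ S M)
    (hM : M ≤ M') : IndicatorMorreyLE n p φ S M' :=
  fun x r hr => (h x r hr).trans (by gcongr)

lemma le_rearr_indicator {S : Set (En n)} {A t : ℝ} (hA : 0 < A)
    (hSt : ENNReal.ofReal t < volume S) :
    ENNReal.ofReal A ≤ rearr n (S.indicator fun _ => A) t := by
  refine le_sInf fun σ ⟨_, hσ⟩ => not_lt.1 fun hσA => hSt.not_ge (le_trans ?_ hσ)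
  refine measure_mono fun x hx => ?_
  simpa [Set.indicator_of_mem hx, abs_of_pos hA] using hσA

lemma setLIntegral_norm_indicator_const_rpow {α : Type*} [MeasurableSpace α] {μ : Measure α}
    {p : ℝ} (hp : 0 < p) {S : Set α} (hS : MeasurableSet S) {A : ℝ} (hA : 0 ≤ A) (s : Set α) :
    ∫⁻ y in s, ENNReal.ofReal (‖S.indicator (fun _ => A) y‖ ^ p) ∂μ
      = ENNReal.ofReal (A ^ p) * μ (S ∩ s) := by
  have hpt : (fun y => ENNReal.ofReal (‖S.indicator (fun _ => A) y‖ ^ p))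
      = S.indicator fun _ => ENNReal.ofReal (A ^ p) := by
    ext y
    by_cases hy : y ∈ S
    · simp [hy, abs_of_nonneg hA]
    · simp [hy, Real.zero_rpow hp.ne']
  rw [hpt, lintegral_indicator hS, Measure.restrict_restrict hS, setLIntegral_const]

lemma morreyNorm_indicator_le (hp : 0 < p) (hφ : GClass n p φ) {S : Set (En n)}
    (hS : MeasurableSet S) {A M : ℝ} (hA : 0 ≤ A) (hM : 0 ≤ M) (h : IndicatorMorreyLE n p φ S M) :
    morreyNorm n p φ (S.indicator fun _ => A) ≤ ENNReal.ofReal (A * M ^ (1 / p)) := by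
  refine iSup_le fun x => iSup₂_le fun r hr => ?_
  have hfin : volume (S ∩ cube n x r) ≠ ∞ :=
    ne_top_of_le_ne_top (volume_cube_ne_top x hr.le) (measure_mono inter_subset_right)
  have hφr := hφ.pos hr
  set v := volume.real (S ∩ cube n x r)
  rw [setLIntegral_norm_indicator_const_rpow hp hS hA, volume_cube x hr.le,
    ← ofReal_measureReal hfin, ← ENNReal.ofReal_mul (by positivity),
    ← ENNReal.ofReal_inv_of_pos (by positivity), ← ENNReal.ofReal_mul (by positivity),
    ENNReal.ofReal_rpow_of_nonneg (by positivity) (by positivity),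
    ← ENNReal.ofReal_mul hφr.le]
  refine ENNReal.ofReal_le_ofReal ?_
  have hroot : ∀ a b : ℝ, 0 ≤ a → 0 ≤ b → a * b ^ (1 / p) = (a ^ p * b) ^ (1 / p) := by
    intro a b ha hb
    rw [Real.mul_rpow (by positivity) hb, one_div, Real.rpow_rpow_inv ha hp.ne']
  have hv : 0 ≤ v := measureReal_nonneg
  rw [hroot _ _ hφr.le (by positivity), hroot _ _ hA hM]
  refine Real.rpow_le_rpow (by positivity) ?_ (by positivity)
  calc φ r ^ p * ((r ^ n)⁻¹ * (A ^ p * v)) = A ^ p * (φ r ^ p * v) / r ^ n := by ring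
    _ ≤ A ^ p * (M * r ^ n) / r ^ n := by
        have := h x r hr
        gcongr
    _ = A ^ p * M := by field_simp

theorem rpow_neg_le_morreyEnvelope (hp : 0 < p) (hφ : GClass n p φ) {S : Set (En n)}
    (hS : MeasurableSet S) {t : ℝ} (hSt : ENNReal.ofReal t < volume S) {M : ℝ} (hM : 0 < M)
    (h : IndicatorMorreyLE n p φ S M) :
    ENNReal.ofReal (M ^ (-(1 / p))) ≤ morreyEnvelope n p φ t := by
  set A := M ^ (-(1 / p))
  have hnorm : morreyNorm n p φ (S.indicator fun _ => A) ≤ 1 := by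
    refine (morreyNorm_indicator_le hp hφ hS (by positivity) hM.le h).trans_eq ?_
    rw [← Real.rpow_add hM, neg_add_cancel, Real.rpow_zero, ENNReal.ofReal_one]
  calc ENNReal.ofReal A ≤ rearr n (S.indicator fun _ => A) t :=
        le_rearr_indicator (by positivity) hSt
    _ ≤ morreyEnvelope n p φ t :=
        le_iSup₂_of_le (S.indicator fun _ => A) (measurable_const.indicator hS)
          (le_iSup_of_le hnorm le_rfl)

end LowerBound

section TestSets

variable {n : ℕ} {p : ℝ} {φ : ℝ → ℝ}

lemma indicatorMorreyLE_cube (hp : 0 < p) (hφ : GClass n p φ) (y : En n) {s : ℝ} (hs : 0 < s) :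
    IndicatorMorreyLE n p φ (cube n y s) (φ s ^ p) := by
  intro x r hr
  rcases le_total r s with hrs | hsr
  · calc φ r ^ p * volume.real (cube n y s ∩ cube n x r) ≤ φ s ^ p * volume.real (cube n x r) :=
          mul_le_mul (hφ.rpow_le_rpow hp hr hrs)
            (measureReal_mono inter_subset_right (volume_cube_ne_top x hr.le))
            measureReal_nonneg (by have := hφ.pos hs; positivity)
      _ = φ s ^ p * r ^ n := by rw [measureReal_cube x hr.le]
  · calc φ r ^ p * volume.real (cube n y s ∩ cube n x r) ≤ φ r ^ p * volume.real (cube n y s) := by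
          have := hφ.pos hr
          exact mul_le_mul_of_nonneg_left
            (measureReal_mono inter_subset_left (volume_cube_ne_top y hs.le)) (by positivity)
      _ = φ r ^ p * s ^ n := by rw [measureReal_cube y hs.le]
      _ ≤ φ s ^ p * r ^ n := hφ.rpow_mul_pow_le hp hs hsr

def cubeRowCenter (n j : ℕ) : En n := WithLp.toLp 2 fun _ => 3 * (j : ℝ)

def cubeRow (n N : ℕ) (s : ℝ) : Set (En n) := ⋃ j ∈ Finset.range N, cube n (cubeRowCenter n j) s

lemma measurableSet_cubeRow (N : ℕ) (s : ℝ) : MeasurableSet (cubeRow n N s) :=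
  Finset.measurableSet_biUnion _ fun _ _ => measurableSet_cube _ s

lemma eq_of_mem_cube_cubeRowCenter (hn : 0 < n) {s r : ℝ} (hsr : s + r ≤ 2) {x y y' : En n}
    {j k : ℕ} (hyj : y ∈ cube n (cubeRowCenter n j) s) (hy : y ∈ cube n x r)
    (hy'k : y' ∈ cube n (cubeRowCenter n k) s) (hy' : y' ∈ cube n x r) : j = k := by
  set i : Fin n := ⟨0, hn⟩
  have hj := abs_sub_le_of_mem_cube hyj hy i
  have hk := abs_sub_le_of_mem_cube hy'k hy' i
  simp only [cubeRowCenter, abs_le] at hj hk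
  have hjk : j < k + 1 := by exact_mod_cast (by linarith : (j : ℝ) < k + 1)
  have hkj : k < j + 1 := by exact_mod_cast (by linarith : (k : ℝ) < j + 1)
  omega

lemma volume_cubeRow (hn : 0 < n) {s : ℝ} (hs : 0 ≤ s) (hs1 : s ≤ 1) (N : ℕ) :
    volume (cubeRow n N s) = ENNReal.ofReal (N * s ^ n) := by
  have hdisj : Set.PairwiseDisjoint (Finset.range N : Set ℕ)
      fun j => cube n (cubeRowCenter n j) s :=
    fun j _ k _ hjk => Set.disjoint_left.2 fun y hyj hyk =>
      hjk (eq_of_mem_cube_cubeRowCenter hn (x := y) (r := 0) (by linarith) hyj (fun _ => by simp)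
        hyk (fun _ => by simp))
  rw [cubeRow, measure_biUnion_finset hdisj fun _ _ => measurableSet_cube _ s]
  simp [volume_cube _ hs, ENNReal.ofReal_mul, ENNReal.ofReal_natCast]

lemma exists_cubeRow_inter_cube_subset (hn : 0 < n) {s r : ℝ} (hs1 : s ≤ 1) (hr1 : r ≤ 1)
    (N : ℕ) (x : En n) : ∃ j, cubeRow n N s ∩ cube n x r ⊆ cube n (cubeRowCenter n j) s := by
  rcases (cubeRow n N s ∩ cube n x r).eq_empty_or_nonempty with h | ⟨y, hyS, hyx⟩
  · exact ⟨0, h ▸ empty_subset _⟩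
  obtain ⟨j, -, hyj⟩ := mem_iUnion₂.1 hyS
  refine ⟨j, fun y' ⟨hy'S, hy'x⟩ => ?_⟩
  obtain ⟨k, -, hy'k⟩ := mem_iUnion₂.1 hy'S
  rwa [eq_of_mem_cube_cubeRowCenter hn (by linarith) hyj hyx hy'k hy'x]

lemma indicatorMorreyLE_cubeRow (hn : 0 < n) (hp : 0 < p) (hφ : GClass n p φ) (hφ1 : φ 1 = 1)
    {s : ℝ} (hs : 0 < s) (hs1 : s ≤ 1) (N : ℕ) :
    IndicatorMorreyLE n p φ (cubeRow n N s) (max (φ s ^ p) (N * s ^ n)) := by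
  intro x r hr
  rcases le_total r 1 with hr1 | hr1
  · obtain ⟨j, hj⟩ := exists_cubeRow_inter_cube_subset hn hs1 hr1 N x
    calc φ r ^ p * volume.real (cubeRow n N s ∩ cube n x r)
        ≤ φ r ^ p * volume.real (cube n (cubeRowCenter n j) s ∩ cube n x r) := by
          have := hφ.pos hr
          exact mul_le_mul_of_nonneg_left (measureReal_mono (subset_inter hj inter_subset_right)
            (ne_top_of_le_ne_top (volume_cube_ne_top x hr.le) (measure_mono inter_subset_right)))
            (by positivity)
      _ ≤ φ s ^ p * r ^ n := indicatorMorreyLE_cube hp hφ _ hs x r hr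
      _ ≤ max (φ s ^ p) (N * s ^ n) * r ^ n := by gcongr; exact le_max_left _ _
  · have hvol : volume.real (cubeRow n N s) = N * s ^ n := by
      rw [measureReal_def, volume_cubeRow hn hs.le hs1, ENNReal.toReal_ofReal (by positivity)]
    calc φ r ^ p * volume.real (cubeRow n N s ∩ cube n x r) ≤ r ^ n * (N * s ^ n) := by
          have := hφ.pos hr
          gcongr
          · exact hφ.rpow_le_pow_of_one_le hp hφ1 hr1
          · rw [← hvol]
            exact measureReal_mono inter_subset_left
              (by rw [volume_cubeRow hn hs.le hs1]; exact ENNReal.ofReal_ne_top)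
      _ ≤ max (φ s ^ p) (N * s ^ n) * r ^ n := by
          rw [mul_comm]; gcongr; exact le_max_right _ _

lemma exists_cubeRow_of_le_one (hn : 0 < n) (hp : 0 < p) (hφ : GClass n p φ) (hφ1 : φ 1 = 1)
    (hφ0 : Tendsto φ (𝓝[>] 0) (𝓝 0)) {c : ℝ} (hc : 0 < c)
    (hlow : ∀ r, 0 < r → c ^ p * r ^ n ≤ φ r ^ p) {t : ℝ} (ht : 0 < t) (ht1 : t ≤ 1) :
    ∃ S, MeasurableSet S ∧ ENNReal.ofReal t < volume S ∧
      IndicatorMorreyLE n p φ S (2 ^ n * (1 + (c ^ p)⁻¹) * t) := by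
  obtain ⟨s, hs, hs1, -, hst⟩ := hφ.exists_rpow_mem_Icc hp hφ1 hφ0 ht ht1
  have hsn : 0 < s ^ n := by positivity
  set N := ⌊t / s ^ n⌋₊ + 1
  have hNlow : t < N * s ^ n := by
    rw [← div_lt_iff₀ hsn]
    exact_mod_cast Nat.lt_floor_add_one (t / s ^ n)
  have hNup : N * s ^ n ≤ t + s ^ n := by
    have := Nat.floor_le (div_nonneg ht.le hsn.le)
    rw [le_div_iff₀ hsn] at this
    push_cast [N]
    linarith
  have hsmall : s ^ n ≤ (c ^ p)⁻¹ * (2 ^ n * t) := by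
    rw [le_inv_mul_iff₀ (by positivity)]
    exact (hlow s hs).trans hst
  have h2n : (1 : ℝ) ≤ 2 ^ n := one_le_pow₀ one_le_two
  refine ⟨cubeRow n N s, measurableSet_cubeRow N s, ?_,
    (indicatorMorreyLE_cubeRow hn hp hφ hφ1 hs hs1 N).mono (max_le ?_ ?_)⟩
  · rw [volume_cubeRow hn hs.le hs1]
    exact (ENNReal.ofReal_lt_ofReal_iff (by positivity)).2 hNlow
  · nlinarith [inv_pos.2 (by positivity : (0 : ℝ) < c ^ p)]
  · nlinarith [inv_pos.2 (by positivity : (0 : ℝ) < c ^ p)]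

lemma exists_cube_of_one_le (hn : 0 < n) (hp : 0 < p) (hφ : GClass n p φ) (hφ1 : φ 1 = 1)
    {t : ℝ} (ht : 1 ≤ t) :
    ∃ S, MeasurableSet S ∧ ENNReal.ofReal t < volume S ∧ IndicatorMorreyLE n p φ S (2 * t) := by
  set s := (2 * t) ^ (n : ℝ)⁻¹
  have hsn : s ^ n = 2 * t := Real.rpow_inv_natCast_pow (by positivity) hn.ne'
  have hs1 : 1 ≤ s := Real.one_le_rpow (by linarith) (by positivity)
  refine ⟨cube n 0 s, measurableSet_cube 0 s, ?_,
    (indicatorMorreyLE_cube hp hφ 0 (by positivity)).mono ?_⟩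
  · rw [volume_cube 0 (by positivity), hsn]
    exact (ENNReal.ofReal_lt_ofReal_iff (by positivity)).2 (by linarith)
  · exact hsn ▸ hφ.rpow_le_pow_of_one_le hp hφ1 hs1

lemma exists_indicatorMorreyLE (hn : 0 < n) (hp : 0 < p) (hφ : GClass n p φ) (hφ1 : φ 1 = 1)
    (hφ0 : Tendsto φ (𝓝[>] 0) (𝓝 0)) {c : ℝ} (hc : 0 < c)
    (hlow : ∀ r, 0 < r → c ^ p * r ^ n ≤ φ r ^ p) {t : ℝ} (ht : 0 < t) :
    ∃ S, MeasurableSet S ∧ ENNReal.ofReal t < volume S ∧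
      IndicatorMorreyLE n p φ S (2 ^ n * (1 + (c ^ p)⁻¹) * t) := by
  rcases le_total t 1 with ht1 | ht1
  · exact exists_cubeRow_of_le_one hn hp hφ hφ1 hφ0 hc hlow ht ht1
  obtain ⟨S, hS, hSt, hSM⟩ := exists_cube_of_one_le hn hp hφ hφ1 ht1
  refine ⟨S, hS, hSt, hSM.mono ?_⟩
  have h2n : (2 : ℝ) ≤ 2 ^ n := by simpa using pow_le_pow_right₀ one_le_two hn
  calc 2 * t ≤ 2 ^ n * t := by gcongr
    _ ≤ 2 ^ n * (1 + (c ^ p)⁻¹) * t := by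
        gcongr
        exact le_mul_of_one_le_right (by positivity) (le_add_of_nonneg_right (by positivity))

end TestSets

/-- If `lim_{t→0⁺} φ(t)=0` and `lim_{t→∞} t^{-n/p} φ(t) = c > 0`, then
`𝔈_G ℳ_{φ,p}(ℝⁿ)(t) ∼ t^{-1/p}` for `t>0`. -/
theorem statement5 (n : ℕ) (hn : 0 < n) (p : ℝ) (hp : 0 < p) (φ : ℝ → ℝ)
    (hφ : GClass n p φ) (hφ1 : φ 1 = 1)
    (hφ0 : Filter.Tendsto φ (nhdsWithin 0 (Set.Ioi 0)) (nhds 0))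
    (hinf : ∃ c : ℝ, 0 < c ∧
      Filter.Tendsto (fun t : ℝ => φ t / t ^ ((n : ℝ) / p)) Filter.atTop (nhds c)) :
    ∃ c₁ c₂ : ℝ, 0 < c₁ ∧ c₁ ≤ c₂ ∧ ∀ t : ℝ, 0 < t →
      ENNReal.ofReal (c₁ * t ^ (-(1 / p))) ≤ morreyEnvelope n p φ t ∧
      morreyEnvelope n p φ t ≤ ENNReal.ofReal (c₂ * t ^ (-(1 / p))) := by
  obtain ⟨c, hc, hlim⟩ := hinf
  have hlow : ∀ r, 0 < r → c ^ p * r ^ n ≤ φ r ^ p :=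
    fun r hr => hφ.mul_rpow_le_of_tendsto hp hc hlim hr
  set K := 2 ^ n * (1 + (c ^ p)⁻¹)
  have hK : 0 < K := by positivity
  refine ⟨K ^ (-(1 / p)), max c⁻¹ (K ^ (-(1 / p))), by positivity, le_max_right _ _,
    fun t ht => ⟨?_, ?_⟩⟩
  · obtain ⟨S, hS, hSt, hSM⟩ := exists_indicatorMorreyLE hn hp hφ hφ1 hφ0 hc hlow ht
    rw [← Real.mul_rpow hK.le ht.le]
    exact rpow_neg_le_morreyEnvelope hp hφ hS hSt (by positivity) hSM
  · calc morreyEnvelope n p φ t ≤ ENNReal.ofReal (c⁻¹ * t ^ (-(1 / p))) :=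
          morreyEnvelope_le hp hφ hc hlow ht
      _ ≤ ENNReal.ofReal (max c⁻¹ (K ^ (-(1 / p))) * t ^ (-(1 / p))) := by
          gcongr
          exact le_max_left _ _
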